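/- arXiv:1904.06056 — 6 statements merged into one kernel-verified Lean document; each statement's English description precedes it below -/
import Mathlib

section
/- Let ξ be a linear form on V. Then (i) S^ξ_X Y = S^ξ_Y X for all X, Y ∈ V, and (ii) for every X ∈ V and every cyclic permutation (α,β,γ) of (1,2,3), the commutator S^ξ_X ∘ I_α − I_α ∘ S^ξ_X equals 2 ξ(I_β X) I_γ − 2 ξ(I_γ X) I_β; in particular this commutator lies in the real span of I₁, I₂, I₃. (This is the algebraic content of the fact that ∇ + S^ξ is again a torsion-free quaternionic connection, Lemma 2.1 of the paper.) -/
/-- the symmetry of `S^ξ` and the commutator formula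
`S^ξ_X ∘ I_α − I_α ∘ S^ξ_X = 2 ξ(I_β X) I_γ − 2 ξ(I_γ X) I_β` for each cyclic
permutation `(α,β,γ)` of `(1,2,3)`; in particular the commutator lies in the
span of `I₁, I₂, I₃`. -/
theorem stmt0 {V : Type*} [AddCommGroup V] [Module ℝ V] [FiniteDimensional ℝ V]
    (n : ℕ) (hn : 1 ≤ n) (hdim : Module.finrank ℝ V = 4 * n)
    (I1 I2 I3 : V →ₗ[ℝ] V)
    (hI1 : I1 ∘ₗ I1 = -LinearMap.id) (hI2 : I2 ∘ₗ I2 = -LinearMap.id)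
    (hI3 : I3 ∘ₗ I3 = -LinearMap.id)
    (hI12 : I1 ∘ₗ I2 = I3) (hI21 : I2 ∘ₗ I1 = -I3)
    (ξ : V →ₗ[ℝ] ℝ) (S : V → V → V)
    (hS : ∀ X Y, S X Y = ξ X • Y + ξ Y • X - ξ (I1 X) • I1 Y - ξ (I1 Y) • I1 X
      - ξ (I2 X) • I2 Y - ξ (I2 Y) • I2 X - ξ (I3 X) • I3 Y - ξ (I3 Y) • I3 X) :
    (∀ X Y, S X Y = S Y X) ∧
    (∀ X Y, S X (I1 Y) - I1 (S X Y) = (2 * ξ (I2 X)) • I3 Y - (2 * ξ (I3 X)) • I2 Y) ∧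
    (∀ X Y, S X (I2 Y) - I2 (S X Y) = (2 * ξ (I3 X)) • I1 Y - (2 * ξ (I1 X)) • I3 Y) ∧
    (∀ X Y, S X (I3 Y) - I3 (S X Y) = (2 * ξ (I1 X)) • I2 Y - (2 * ξ (I2 X)) • I1 Y) ∧
    (∀ X, ∃ a b c : ℝ, ∀ Y, S X (I1 Y) - I1 (S X Y) = a • I1 Y + b • I2 Y + c • I3 Y) ∧
    (∀ X, ∃ a b c : ℝ, ∀ Y, S X (I2 Y) - I2 (S X Y) = a • I1 Y + b • I2 Y + c • I3 Y) ∧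
    (∀ X, ∃ a b c : ℝ, ∀ Y, S X (I3 Y) - I3 (S X Y) = a • I1 Y + b • I2 Y + c • I3 Y) := by
  have h11 : ∀ y, I1 (I1 y) = -y := fun y => by
    have := LinearMap.congr_fun hI1 y; simpa using this
  have h22 : ∀ y, I2 (I2 y) = -y := fun y => by
    have := LinearMap.congr_fun hI2 y; simpa using this
  have h33 : ∀ y, I3 (I3 y) = -y := fun y => by
    have := LinearMap.congr_fun hI3 y; simpa using this
  have h12 : ∀ y, I1 (I2 y) = I3 y := fun y => by
    have := LinearMap.congr_fun hI12 y; simpa using this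
  have h21 : ∀ y, I2 (I1 y) = -I3 y := fun y => by
    have := LinearMap.congr_fun hI21 y; simpa using this
  have h13 : ∀ y, I1 (I3 y) = -I2 y := fun y => by
    rw [← h12 y, h11]
  have h31 : ∀ y, I3 (I1 y) = I2 y := fun y => by
    have : I1 (I2 (I1 y)) = I3 (I1 y) := h12 (I1 y)
    rw [h21, map_neg, h13, neg_neg] at this
    exact this.symm
  have h32 : ∀ y, I3 (I2 y) = -I1 y := fun y => by
    rw [← h12 (I2 y), h22, map_neg]
  have h23 : ∀ y, I2 (I3 y) = I1 y := fun y => by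
    rw [← h12 y, h21, h32, neg_neg]
  have key1 : ∀ X Y, S X (I1 Y) - I1 (S X Y) = (2 * ξ (I2 X)) • I3 Y - (2 * ξ (I3 X)) • I2 Y := by
    intro X Y
    rw [hS, hS]
    simp only [map_add, map_sub, map_smul, map_neg, h11, h12, h13, h21, h22, h23, h31, h32, h33,
      smul_neg, map_neg, neg_neg]
    module
  have key2 : ∀ X Y, S X (I2 Y) - I2 (S X Y) = (2 * ξ (I3 X)) • I1 Y - (2 * ξ (I1 X)) • I3 Y := by
    intro X Y
    rw [hS, hS]
    simp only [map_add, map_sub, map_smul, map_neg, h11, h12, h13, h21, h22, h23, h31, h32, h33,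
      smul_neg, map_neg, neg_neg]
    module
  have key3 : ∀ X Y, S X (I3 Y) - I3 (S X Y) = (2 * ξ (I1 X)) • I2 Y - (2 * ξ (I2 X)) • I1 Y := by
    intro X Y
    rw [hS, hS]
    simp only [map_add, map_sub, map_smul, map_neg, h11, h12, h13, h21, h22, h23, h31, h32, h33,
      smul_neg, map_neg, neg_neg]
    module
  refine ⟨fun X Y => by rw [hS, hS]; module, key1, key2, key3,
    fun X => ⟨0, -(2 * ξ (I3 X)), 2 * ξ (I2 X), fun Y => by rw [key1]; module⟩,
    fun X => ⟨2 * ξ (I3 X), 0, -(2 * ξ (I1 X)), fun Y => by rw [key2]; module⟩,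
    fun X => ⟨-(2 * ξ (I2 X)), 2 * ξ (I1 X), 0, fun Y => by rw [key3]; module⟩⟩
end

section
/- Let A be a linear endomorphism of V such that for each α ∈ {1,2,3} the commutator A ∘ I_α − I_α ∘ A lies in the real span of I₁, I₂, I₃. Then A = −(1/(4n)) Σ_{α=1}^{3} Tr(A∘I_α) I_α + (1/(4n)) Tr(A) id + T₀, where T₀ := (1/4)(A − Σ_{α=1}^{3} I_α∘A∘I_α) − (1/(4n)) Tr(A) id commutes with each of I₁, I₂, I₃ and satisfies Tr(T₀) = 0. (This is the explicit decomposition of ∇X in the normalizer N(Q) = Q ⊕ ℝ·id ⊕ Z₀(Q) used in Section 4 of the paper.) -/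
set_option maxHeartbeats 1000000 in
/-- decomposition of an endomorphism `A` normalizing the quaternionic
structure as `A = −(1/4n) Σ Tr(A I_α) I_α + (1/4n) Tr(A) id + T₀`, where
`T₀ = (1/4)(A − Σ I_α A I_α) − (1/4n) Tr(A) id` commutes with `I₁, I₂, I₃`
and is trace-free. -/
theorem stmt4 {V : Type*} [AddCommGroup V] [Module ℝ V] [FiniteDimensional ℝ V]
    (n : ℕ) (hn : 1 ≤ n) (hdim : Module.finrank ℝ V = 4 * n)
    (I1 I2 I3 : V →ₗ[ℝ] V)
    (hI1 : I1 ∘ₗ I1 = -LinearMap.id) (hI2 : I2 ∘ₗ I2 = -LinearMap.id)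
    (hI3 : I3 ∘ₗ I3 = -LinearMap.id)
    (hI12 : I1 ∘ₗ I2 = I3) (hI21 : I2 ∘ₗ I1 = -I3)
    (A T0 : V →ₗ[ℝ] V)
    (hc1 : A ∘ₗ I1 - I1 ∘ₗ A ∈ Submodule.span ℝ ({I1, I2, I3} : Set (V →ₗ[ℝ] V)))
    (hc2 : A ∘ₗ I2 - I2 ∘ₗ A ∈ Submodule.span ℝ ({I1, I2, I3} : Set (V →ₗ[ℝ] V)))
    (hc3 : A ∘ₗ I3 - I3 ∘ₗ A ∈ Submodule.span ℝ ({I1, I2, I3} : Set (V →ₗ[ℝ] V)))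
    (hT0 : T0 = (1 / 4 : ℝ) • (A - I1 ∘ₗ A ∘ₗ I1 - I2 ∘ₗ A ∘ₗ I2 - I3 ∘ₗ A ∘ₗ I3)
      - (1 / (4 * (n : ℝ))) • (LinearMap.trace ℝ V A) • LinearMap.id) :
    A = (-(1 / (4 * (n : ℝ)))) • ((LinearMap.trace ℝ V (A ∘ₗ I1)) • I1
          + (LinearMap.trace ℝ V (A ∘ₗ I2)) • I2 + (LinearMap.trace ℝ V (A ∘ₗ I3)) • I3)
        + (1 / (4 * (n : ℝ))) • (LinearMap.trace ℝ V A) • LinearMap.id + T0 ∧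
    (T0 ∘ₗ I1 = I1 ∘ₗ T0 ∧ T0 ∘ₗ I2 = I2 ∘ₗ T0 ∧ T0 ∘ₗ I3 = I3 ∘ₗ T0) ∧
    LinearMap.trace ℝ V T0 = 0 := by
  have hn4 : (4 * (n : ℝ)) ≠ 0 := by
    have : (1:ℝ) ≤ (n:ℝ) := by exact_mod_cast hn
    positivity
  have hnne : (n : ℝ) ≠ 0 := by
    have : (1:ℝ) ≤ (n:ℝ) := by exact_mod_cast hn
    positivity
  set tr := LinearMap.trace ℝ V with htr
  -- multiplicative versions of the relations
  have m11 : I1 * I1 = -1 := hI1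
  have m22 : I2 * I2 = -1 := hI2
  have m33 : I3 * I3 = -1 := hI3
  have m12 : I1 * I2 = I3 := hI12
  have m21 : I2 * I1 = -I3 := hI21
  have m13 : I1 * I3 = -I2 := by rw [← m12, ← mul_assoc, m11, neg_one_mul]
  have m31 : I3 * I1 = I2 := by rw [← m12, mul_assoc, m21, mul_neg, m13, neg_neg]
  have m32 : I3 * I2 = -I1 := by rw [← m12, mul_assoc, m22, mul_neg, mul_one]
  have m23 : I2 * I3 = I1 := by rw [← m12, ← mul_assoc, m21, neg_mul, m32, neg_neg]
  -- composed product rules (left-assoc normal form)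
  have w11 : ∀ X : V →ₗ[ℝ] V, X * I1 * I1 = -X := fun X => by
    rw [mul_assoc, m11, mul_neg_one]
  have w22 : ∀ X : V →ₗ[ℝ] V, X * I2 * I2 = -X := fun X => by
    rw [mul_assoc, m22, mul_neg_one]
  have w33 : ∀ X : V →ₗ[ℝ] V, X * I3 * I3 = -X := fun X => by
    rw [mul_assoc, m33, mul_neg_one]
  have w12 : ∀ X : V →ₗ[ℝ] V, X * I1 * I2 = X * I3 := fun X => by
    rw [mul_assoc, m12]
  have w21 : ∀ X : V →ₗ[ℝ] V, X * I2 * I1 = -(X * I3) := fun X => by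
    rw [mul_assoc, m21, mul_neg]
  have w13 : ∀ X : V →ₗ[ℝ] V, X * I1 * I3 = -(X * I2) := fun X => by
    rw [mul_assoc, m13, mul_neg]
  have w31 : ∀ X : V →ₗ[ℝ] V, X * I3 * I1 = X * I2 := fun X => by
    rw [mul_assoc, m31]
  have w23 : ∀ X : V →ₗ[ℝ] V, X * I2 * I3 = X * I1 := fun X => by
    rw [mul_assoc, m23]
  have w32 : ∀ X : V →ₗ[ℝ] V, X * I3 * I2 = -(X * I1) := fun X => by
    rw [mul_assoc, m32, mul_neg]
  -- traces
  have tid : tr 1 = (4 * (n:ℝ)) := by rw [htr, LinearMap.trace_one, hdim]; push_cast; ring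
  have cyc : ∀ X Y : V →ₗ[ℝ] V, tr (X * Y) = tr (Y * X) := fun X Y =>
    LinearMap.trace_mul_comm ℝ X Y
  have t1 : tr I1 = 0 := by
    have h := cyc I2 I3
    rw [m23, m32, map_neg] at h
    linarith
  have t2 : tr I2 = 0 := by
    have h := cyc I3 I1
    rw [m31, m13, map_neg] at h
    linarith
  have t3 : tr I3 = 0 := by
    have h := cyc I1 I2
    rw [m12, m21, map_neg] at h
    linarith
  -- extract coefficients
  have extract : ∀ x : V →ₗ[ℝ] V, x ∈ Submodule.span ℝ ({I1, I2, I3} : Set (V →ₗ[ℝ] V)) →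
      ∃ p q r : ℝ, x = p•I1 + q•I2 + r•I3 := by
    intro x hx
    rw [Submodule.mem_span_insert] at hx
    obtain ⟨p, z, hz, rfl⟩ := hx
    rw [Submodule.mem_span_insert] at hz
    obtain ⟨q, w, hw, rfl⟩ := hz
    rw [Submodule.mem_span_singleton] at hw
    obtain ⟨r, rfl⟩ := hw
    exact ⟨p, q, r, by abel⟩
  obtain ⟨a1, b1, c1, h1⟩ := extract _ hc1
  obtain ⟨a2, b2, c2, h2⟩ := extract _ hc2
  obtain ⟨a3, b3, c3, h3⟩ := extract _ hc3
  replace h1 : A * I1 - I1 * A = a1•I1 + b1•I2 + c1•I3 := h1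
  replace h2 : A * I2 - I2 * A = a2•I1 + b2•I2 + c2•I3 := h2
  replace h3 : A * I3 - I3 * A = a3•I1 + b3•I2 + c3•I3 := h3
  set s1 := tr (A * I1) with hs1
  set s2 := tr (A * I2) with hs2
  set s3 := tr (A * I3) with hs3
  -- generic scalar equation from the commutator hypotheses
  have key : ∀ (p q r : ℝ) (J : V →ₗ[ℝ] V),
      A * J - J * A = p•I1 + q•I2 + r•I3 → ∀ K : V →ₗ[ℝ] V,
      tr (A * (J * K)) - tr (A * (K * J)) = p * tr (I1 * K) + q * tr (I2 * K) + r * tr (I3 * K) := by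
    intro p q r J hJ K
    have h := congrArg (fun X => tr (X * K)) hJ
    simp only [sub_mul, add_mul, smul_mul_assoc, map_sub, map_add, map_smul, smul_eq_mul] at h
    have e : tr (J * A * K) = tr (A * (K * J)) := by
      rw [mul_assoc, cyc J (A * K), mul_assoc]
    rw [← mul_assoc A J K, ← e]
    exact h
  -- the nine scalar coefficients
  have ha1 : a1 = 0 := by
    have h := key a1 b1 c1 I1 h1 I1
    rw [m11, m21, m31] at h
    simp only [map_neg, tid, t2, t3, mul_neg_one, mul_zero] at h
    have := mul_eq_zero.mp (by linarith : a1 * (4 * (n:ℝ)) = 0)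
    exact this.resolve_right hn4
  have hb1 : b1 = -(s3 / (2 * (n:ℝ))) := by
    have h := key a1 b1 c1 I1 h1 I2
    rw [m12, m21, m22, m32] at h
    simp only [map_neg, tid, t1, t3, mul_neg, mul_zero, ← hs3] at h
    field_simp
    linarith
  have hc1' : c1 = s2 / (2 * (n:ℝ)) := by
    have h := key a1 b1 c1 I1 h1 I3
    rw [m13, m31, m23, m33] at h
    simp only [map_neg, tid, t1, t2, mul_neg, mul_zero, ← hs2] at h
    field_simp
    linarith
  have ha2 : a2 = s3 / (2 * (n:ℝ)) := by
    have h := key a2 b2 c2 I2 h2 I1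
    rw [m21, m12, m11, m31] at h
    simp only [map_neg, tid, t2, t3, mul_neg, mul_zero, ← hs3] at h
    field_simp
    linarith
  have hb2 : b2 = 0 := by
    have h := key a2 b2 c2 I2 h2 I2
    rw [m22, m12, m32] at h
    simp only [map_neg, tid, t1, t3, mul_neg_one, mul_zero] at h
    have := mul_eq_zero.mp (by linarith : b2 * (4 * (n:ℝ)) = 0)
    exact this.resolve_right hn4
  have hc2' : c2 = -(s1 / (2 * (n:ℝ))) := by
    have h := key a2 b2 c2 I2 h2 I3
    rw [m23, m32, m13, m33] at h
    simp only [map_neg, tid, t1, t2, mul_neg, mul_zero, ← hs1] at h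
    field_simp
    linarith
  have ha3 : a3 = -(s2 / (2 * (n:ℝ))) := by
    have h := key a3 b3 c3 I3 h3 I1
    rw [m31, m13, m11, m21] at h
    simp only [map_neg, tid, t2, t3, mul_neg, mul_zero, ← hs2] at h
    field_simp
    linarith
  have hb3 : b3 = s1 / (2 * (n:ℝ)) := by
    have h := key a3 b3 c3 I3 h3 I2
    rw [m32, m23, m12, m22] at h
    simp only [map_neg, tid, t1, t3, mul_neg, mul_zero, ← hs1] at h
    field_simp
    linarith
  have hc3'' : c3 = 0 := by
    have h := key a3 b3 c3 I3 h3 I3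
    rw [m33, m13, m23] at h
    simp only [map_neg, tid, t1, t2, mul_neg_one, mul_zero] at h
    have := mul_eq_zero.mp (by linarith : c3 * (4 * (n:ℝ)) = 0)
    exact this.resolve_right hn4
  -- rewriting rules pushing A to the left
  have l1 : I1 * A = A * I1 - (a1•I1 + b1•I2 + c1•I3) := by rw [← h1]; abel
  have l2 : I2 * A = A * I2 - (a2•I1 + b2•I2 + c2•I3) := by rw [← h2]; abel
  have l3 : I3 * A = A * I3 - (a3•I1 + b3•I2 + c3•I3) := by rw [← h3]; abel
  -- T0 in multiplicative form
  have hT0m : T0 = (1 / 4 : ℝ) • (A - I1 * (A * I1) - I2 * (A * I2) - I3 * (A * I3))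
      - (1 / (4 * (n : ℝ))) • (tr A • 1) := hT0
  -- part 1 (multiplicative form)
  have key1 : A = (-(1 / (4 * (n:ℝ)))) • (s1 • I1 + s2 • I2 + s3 • I3)
      + (1 / 4 : ℝ) • (A - I1 * (A * I1) - I2 * (A * I2) - I3 * (A * I3)) := by
    simp only [← mul_assoc, l1, l2, l3, sub_mul, add_mul, smul_mul_assoc,
      m11, m22, m33, m12, m21, m13, m31, m23, m32,
      w11, w22, w33, w12, w21, w13, w31, w23, w32,
      mul_one, one_mul, neg_mul, mul_neg, neg_one_mul, mul_neg_one]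
    simp only [ha1, hb1, hc1', ha2, hb2, hc2', ha3, hb3, hc3'']
    match_scalars <;> field_simp <;> ring
  -- commutation
  have hQ : (1 / 4 : ℝ) • (A - I1 * (A * I1) - I2 * (A * I2) - I3 * (A * I3))
      = A + (1 / (4 * (n:ℝ))) • (s1 • I1 + s2 • I2 + s3 • I3) := by
    conv_rhs => rw [key1]
    module
  have hT0' : T0 = A + (1 / (4 * (n:ℝ))) • (s1 • I1 + s2 • I2 + s3 • I3)
      - (1 / (4 * (n : ℝ))) • (tr A • 1) := by rw [hT0m, hQ]
  have com1 : T0 * I1 = I1 * T0 := by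
    rw [hT0']
    simp only [add_mul, mul_add, sub_mul, mul_sub, smul_mul_assoc, mul_smul_comm,
      one_mul, mul_one, smul_add, l1, l2, l3,
      m11, m22, m33, m12, m21, m13, m31, m23, m32]
    simp only [ha1, hb1, hc1', ha2, hb2, hc2', ha3, hb3, hc3'']
    match_scalars <;> field_simp <;> ring
  have com2 : T0 * I2 = I2 * T0 := by
    rw [hT0']
    simp only [add_mul, mul_add, sub_mul, mul_sub, smul_mul_assoc, mul_smul_comm,
      one_mul, mul_one, smul_add, l1, l2, l3,
      m11, m22, m33, m12, m21, m13, m31, m23, m32]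
    simp only [ha1, hb1, hc1', ha2, hb2, hc2', ha3, hb3, hc3'']
    match_scalars <;> field_simp <;> ring
  have com3 : T0 * I3 = I3 * T0 := by
    rw [hT0']
    simp only [add_mul, mul_add, sub_mul, mul_sub, smul_mul_assoc, mul_smul_comm,
      one_mul, mul_one, smul_add, l1, l2, l3,
      m11, m22, m33, m12, m21, m13, m31, m23, m32]
    simp only [ha1, hb1, hc1', ha2, hb2, hc2', ha3, hb3, hc3'']
    match_scalars <;> field_simp <;> ring
  -- trace of T0
  have trT0 : tr T0 = 0 := by
    rw [hT0m]
    simp only [map_sub, map_smul, smul_eq_mul, tid]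
    rw [cyc I1 (A * I1), cyc I2 (A * I2), cyc I3 (A * I3), w11 A, w22 A, w33 A]
    simp only [map_neg]
    field_simp
    ring
  refine ⟨?_, ⟨com1, com2, com3⟩, trT0⟩
  show A = (-(1 / (4 * (n : ℝ)))) • (tr (A * I1) • I1 + tr (A * I2) • I2 + tr (A * I3) • I3)
      + (1 / (4 * (n : ℝ))) • (tr A • (1 : V →ₗ[ℝ] V)) + T0
  rw [hT0m, ← hs1, ← hs2, ← hs3]
  conv_lhs => rw [key1]
  module
end

section
/- For all Y, Z ∈ V and each α ∈ {1,2,3} one has Ω_α(Y, I_α Z) = (1/(2(n+1)))(R^a(I_α Y, I_α Z) − R^a(Y,Z)) − (1/(2n))(R^s(I_α Y, I_α Z) + R^s(Y,Z)) + (2/(n(n+2))) (Π_h R^s)(Y,Z). (This is identity (5.9) of the paper, expressing the curvature 2-forms of a quaternionic connection in terms of its Ricci tensor.) -/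
set_option maxHeartbeats 2000000


/-- identity (5.9) expressing `Ω_α(Y, I_α Z)` in terms of the
symmetric and antisymmetric parts of the Ricci tensor. -/
theorem stmt5 {V : Type*} [AddCommGroup V] [Module ℝ V] [FiniteDimensional ℝ V]
    (n : ℕ) (hn : 1 ≤ n) (hdim : Module.finrank ℝ V = 4 * n)
    (I1 I2 I3 : V →ₗ[ℝ] V)
    (hI1 : I1 ∘ₗ I1 = -LinearMap.id) (hI2 : I2 ∘ₗ I2 = -LinearMap.id)
    (hI3 : I3 ∘ₗ I3 = -LinearMap.id)
    (hI12 : I1 ∘ₗ I2 = I3) (hI21 : I2 ∘ₗ I1 = -I3)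
    (R : V →ₗ[ℝ] V →ₗ[ℝ] ℝ)
    (Rs Ra Pih B Om1 Om2 Om3 : V → V → ℝ)
    (hRs : ∀ X Y, Rs X Y = (1 / 2) * (R X Y + R Y X))
    (hRa : ∀ X Y, Ra X Y = (1 / 2) * (R X Y - R Y X))
    (hPih : ∀ X Y, Pih X Y = (1 / 4) * (Rs X Y + Rs (I1 X) (I1 Y)
      + Rs (I2 X) (I2 Y) + Rs (I3 X) (I3 Y)))
    (hB : ∀ X Y, B X Y = (1 / (4 * ((n : ℝ) + 1))) * Ra X Y
      + (1 / (4 * (n : ℝ))) * Rs X Y - (1 / (2 * (n : ℝ) * ((n : ℝ) + 2))) * Pih X Y)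
    (hOm1 : ∀ X Y, Om1 X Y = 2 * (B X (I1 Y) - B Y (I1 X)))
    (hOm2 : ∀ X Y, Om2 X Y = 2 * (B X (I2 Y) - B Y (I2 X)))
    (hOm3 : ∀ X Y, Om3 X Y = 2 * (B X (I3 Y) - B Y (I3 X))) :
    ∀ Y Z,
      Om1 Y (I1 Z) = (1 / (2 * ((n : ℝ) + 1))) * (Ra (I1 Y) (I1 Z) - Ra Y Z)
          - (1 / (2 * (n : ℝ))) * (Rs (I1 Y) (I1 Z) + Rs Y Z)
          + (2 / ((n : ℝ) * ((n : ℝ) + 2))) * Pih Y Z ∧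
      Om2 Y (I2 Z) = (1 / (2 * ((n : ℝ) + 1))) * (Ra (I2 Y) (I2 Z) - Ra Y Z)
          - (1 / (2 * (n : ℝ))) * (Rs (I2 Y) (I2 Z) + Rs Y Z)
          + (2 / ((n : ℝ) * ((n : ℝ) + 2))) * Pih Y Z ∧
      Om3 Y (I3 Z) = (1 / (2 * ((n : ℝ) + 1))) * (Ra (I3 Y) (I3 Z) - Ra Y Z)
          - (1 / (2 * (n : ℝ))) * (Rs (I3 Y) (I3 Z) + Rs Y Z)
          + (2 / ((n : ℝ) * ((n : ℝ) + 2))) * Pih Y Z := by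
  have h11 : ∀ x, I1 (I1 x) = -x := fun x => by
    have := LinearMap.congr_fun hI1 x; simpa using this
  have h22 : ∀ x, I2 (I2 x) = -x := fun x => by
    have := LinearMap.congr_fun hI2 x; simpa using this
  have h33 : ∀ x, I3 (I3 x) = -x := fun x => by
    have := LinearMap.congr_fun hI3 x; simpa using this
  have h12 : ∀ x, I1 (I2 x) = I3 x := fun x => by
    have := LinearMap.congr_fun hI12 x; simpa using this
  have h21 : ∀ x, I2 (I1 x) = -(I3 x) := fun x => by
    have := LinearMap.congr_fun hI21 x; simpa using this
  have h13 : ∀ x, I1 (I3 x) = -(I2 x) := fun x => by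
    rw [← h12 x, h11]
  have h31 : ∀ x, I3 (I1 x) = I2 x := fun x => by
    rw [← h12 (I1 x), h21, map_neg, h13, neg_neg]
  have h32 : ∀ x, I3 (I2 x) = -(I1 x) := fun x => by
    rw [← h12 (I2 x), h22, map_neg]
  have h23 : ∀ x, I2 (I3 x) = I1 x := fun x => by
    rw [← h12 x, h21, h32, neg_neg]
  intro Y Z
  refine ⟨?_, ?_, ?_⟩ <;>
  · simp only [hOm1, hOm2, hOm3, hB, hPih, hRa, hRs, h11, h22, h33, h12, h21, h13, h31,
      h32, h23, map_neg, LinearMap.neg_apply]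
    have hn1 : (n : ℝ) ≠ 0 := by
      exact_mod_cast Nat.one_le_iff_ne_zero.mp hn
    have hn2 : (n : ℝ) + 1 ≠ 0 := by positivity
    have hn3 : (n : ℝ) + 2 ≠ 0 := by positivity
    field_simp
    ring
end

section
/- For all X, Y ∈ V and each α ∈ {1,2,3} one has Ω_α(I_α X, Y) + Ω_α(X, I_α Y) = −(1/(n+1)) (R^a(X,Y) − R^a(I_α X, I_α Y)). (This identity, proved in the course of Lemma 3.7 of the paper, shows that the obstruction to integrability of the almost hypercomplex structures on the Swann bundle is governed by the antisymmetric part of the Ricci tensor.) -/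
/-- `Ω_α(I_α X, Y) + Ω_α(X, I_α Y) = −(1/(n+1))(R^a(X,Y) − R^a(I_α X, I_α Y))`. -/
theorem stmt6 {V : Type*} [AddCommGroup V] [Module ℝ V] [FiniteDimensional ℝ V]
    (n : ℕ) (hn : 1 ≤ n) (hdim : Module.finrank ℝ V = 4 * n)
    (I1 I2 I3 : V →ₗ[ℝ] V)
    (hI1 : I1 ∘ₗ I1 = -LinearMap.id) (hI2 : I2 ∘ₗ I2 = -LinearMap.id)
    (hI3 : I3 ∘ₗ I3 = -LinearMap.id)
    (hI12 : I1 ∘ₗ I2 = I3) (hI21 : I2 ∘ₗ I1 = -I3)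
    (R : V →ₗ[ℝ] V →ₗ[ℝ] ℝ)
    (Rs Ra Pih B Om1 Om2 Om3 : V → V → ℝ)
    (hRs : ∀ X Y, Rs X Y = (1 / 2) * (R X Y + R Y X))
    (hRa : ∀ X Y, Ra X Y = (1 / 2) * (R X Y - R Y X))
    (hPih : ∀ X Y, Pih X Y = (1 / 4) * (Rs X Y + Rs (I1 X) (I1 Y)
      + Rs (I2 X) (I2 Y) + Rs (I3 X) (I3 Y)))
    (hB : ∀ X Y, B X Y = (1 / (4 * ((n : ℝ) + 1))) * Ra X Y
      + (1 / (4 * (n : ℝ))) * Rs X Y - (1 / (2 * (n : ℝ) * ((n : ℝ) + 2))) * Pih X Y)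
    (hOm1 : ∀ X Y, Om1 X Y = 2 * (B X (I1 Y) - B Y (I1 X)))
    (hOm2 : ∀ X Y, Om2 X Y = 2 * (B X (I2 Y) - B Y (I2 X)))
    (hOm3 : ∀ X Y, Om3 X Y = 2 * (B X (I3 Y) - B Y (I3 X))) :
    ∀ X Y,
      Om1 (I1 X) Y + Om1 X (I1 Y)
          = -(1 / ((n : ℝ) + 1)) * (Ra X Y - Ra (I1 X) (I1 Y)) ∧
      Om2 (I2 X) Y + Om2 X (I2 Y)
          = -(1 / ((n : ℝ) + 1)) * (Ra X Y - Ra (I2 X) (I2 Y)) ∧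
      Om3 (I3 X) Y + Om3 X (I3 Y)
          = -(1 / ((n : ℝ) + 1)) * (Ra X Y - Ra (I3 X) (I3 Y)) := by
  have hn1 : (n : ℝ) + 1 ≠ 0 := by positivity
  have h1 : ∀ v, I1 (I1 v) = -v := fun v => by
    have := LinearMap.ext_iff.mp hI1 v; simpa using this
  have h2 : ∀ v, I2 (I2 v) = -v := fun v => by
    have := LinearMap.ext_iff.mp hI2 v; simpa using this
  have h3 : ∀ v, I3 (I3 v) = -v := fun v => by
    have := LinearMap.ext_iff.mp hI3 v; simpa using this
  have hRsneg : ∀ X Y, Rs X (-Y) = -Rs X Y := fun X Y => by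
    rw [hRs, hRs]; simp; ring
  have hRaneg : ∀ X Y, Ra X (-Y) = -Ra X Y := fun X Y => by
    rw [hRa, hRa]; simp; ring
  have hPihneg : ∀ X Y, Pih X (-Y) = -Pih X Y := fun X Y => by
    rw [hPih, hPih, map_neg, map_neg, map_neg, hRsneg, hRsneg, hRsneg, hRsneg]; ring
  have hBneg : ∀ X Y, B X (-Y) = -B X Y := fun X Y => by
    rw [hB, hB, hRsneg, hRaneg, hPihneg]; ring
  have hBa : ∀ X Y, B X Y - B Y X = Ra X Y / (2 * ((n : ℝ) + 1)) := by
    intro X Y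
    rw [hB, hB, hPih, hPih, hRa X Y, hRa Y X,
      hRs X Y, hRs Y X, hRs (I1 X) (I1 Y), hRs (I1 Y) (I1 X),
      hRs (I2 X) (I2 Y), hRs (I2 Y) (I2 X), hRs (I3 X) (I3 Y), hRs (I3 Y) (I3 X)]
    field_simp
    ring
  intro X Y
  refine ⟨?_, ?_, ?_⟩
  · rw [hOm1 (I1 X) Y, hOm1 X (I1 Y), h1 X, h1 Y, hBneg, hBneg]
    have e1 := hBa (I1 X) (I1 Y)
    have e2 := hBa X Y
    field_simp at e1 e2 ⊢
    linarith
  · rw [hOm2 (I2 X) Y, hOm2 X (I2 Y), h2 X, h2 Y, hBneg, hBneg]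
    have e1 := hBa (I2 X) (I2 Y)
    have e2 := hBa X Y
    field_simp at e1 e2 ⊢
    linarith
  · rw [hOm3 (I3 X) Y, hOm3 X (I3 Y), h3 X, h3 Y, hBneg, hBneg]
    have e1 := hBa (I3 X) (I3 Y)
    have e2 := hBa X Y
    field_simp at e1 e2 ⊢
    linarith
end

section
/- Suppose R is Q-hermitian, i.e. R(I_α X, I_α Y) = R(X,Y) for all X, Y ∈ V and α = 1,2,3. Then for all Y, Z ∈ V and each α one has Ω_α(Y, I_α Z) = −(1/(n+2)) R^s(Y,Z). In particular Ω₁(Y, I₁ Z) = Ω₂(Y, I₂ Z) = Ω₃(Y, I₃ Z) (the bilinear form Ω_α(·, I_α ·) is independent of α), and Ω_α(X, I_α X) = −(1/(n+2)) R(X,X) for all X. (These are the identities used in Section 5 of the paper to verify the CR equations and to compute Ω_α(X̂, Î_α X̂) for the hypercomplex moment map.) -/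
theorem stmt7_key {V : Type*} [AddCommGroup V] [Module ℝ V]
    (nr : ℝ) (hn : 1 ≤ nr)
    (I : V →ₗ[ℝ] V) (hII : ∀ Z, I (I Z) = -Z)
    (R : V →ₗ[ℝ] V →ₗ[ℝ] ℝ) (Rs Ra Pih B Om : V → V → ℝ)
    (hRs : ∀ X Y, Rs X Y = (1 / 2) * (R X Y + R Y X))
    (hRa : ∀ X Y, Ra X Y = (1 / 2) * (R X Y - R Y X))
    (hPihRs : ∀ X Y, Pih X Y = Rs X Y)
    (hB : ∀ X Y, B X Y = (1 / (4 * (nr + 1))) * Ra X Y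
      + (1 / (4 * nr)) * Rs X Y - (1 / (2 * nr * (nr + 2))) * Pih X Y)
    (hOm : ∀ X Y, Om X Y = 2 * (B X (I Y) - B Y (I X)))
    (hherm : ∀ X Y, R (I X) (I Y) = R X Y) :
    ∀ Y Z, Om Y (I Z) = -(1 / (nr + 2)) * Rs Y Z := by
  intro Y Z
  have h0 : (0:ℝ) < nr := lt_of_lt_of_le one_pos hn
  have h1 : nr + 1 ≠ 0 := by positivity
  have h2 : nr + 2 ≠ 0 := by positivity
  rw [hOm, hII, hB, hB, hPihRs, hPihRs, hRa, hRa, hRs, hRs, hRs, hherm, hherm]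
  simp only [map_neg, LinearMap.neg_apply]
  field_simp
  ring



/-- if `R` is Q-hermitian then `Ω_α(Y, I_α Z) = −(1/(n+2)) R^s(Y,Z)`
(independently of `α`), and `Ω_α(X, I_α X) = −(1/(n+2)) R(X,X)`. -/
theorem stmt7 {V : Type*} [AddCommGroup V] [Module ℝ V] [FiniteDimensional ℝ V]
    (n : ℕ) (hn : 1 ≤ n) (hdim : Module.finrank ℝ V = 4 * n)
    (I1 I2 I3 : V →ₗ[ℝ] V)
    (hI1 : I1 ∘ₗ I1 = -LinearMap.id) (hI2 : I2 ∘ₗ I2 = -LinearMap.id)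
    (hI3 : I3 ∘ₗ I3 = -LinearMap.id)
    (hI12 : I1 ∘ₗ I2 = I3) (hI21 : I2 ∘ₗ I1 = -I3)
    (R : V →ₗ[ℝ] V →ₗ[ℝ] ℝ)
    (Rs Ra Pih B Om1 Om2 Om3 : V → V → ℝ)
    (hRs : ∀ X Y, Rs X Y = (1 / 2) * (R X Y + R Y X))
    (hRa : ∀ X Y, Ra X Y = (1 / 2) * (R X Y - R Y X))
    (hPih : ∀ X Y, Pih X Y = (1 / 4) * (Rs X Y + Rs (I1 X) (I1 Y)
      + Rs (I2 X) (I2 Y) + Rs (I3 X) (I3 Y)))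
    (hB : ∀ X Y, B X Y = (1 / (4 * ((n : ℝ) + 1))) * Ra X Y
      + (1 / (4 * (n : ℝ))) * Rs X Y - (1 / (2 * (n : ℝ) * ((n : ℝ) + 2))) * Pih X Y)
    (hOm1 : ∀ X Y, Om1 X Y = 2 * (B X (I1 Y) - B Y (I1 X)))
    (hOm2 : ∀ X Y, Om2 X Y = 2 * (B X (I2 Y) - B Y (I2 X)))
    (hOm3 : ∀ X Y, Om3 X Y = 2 * (B X (I3 Y) - B Y (I3 X)))
    (hherm1 : ∀ X Y, R (I1 X) (I1 Y) = R X Y)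
    (hherm2 : ∀ X Y, R (I2 X) (I2 Y) = R X Y)
    (hherm3 : ∀ X Y, R (I3 X) (I3 Y) = R X Y) :
    (∀ Y Z, Om1 Y (I1 Z) = -(1 / ((n : ℝ) + 2)) * Rs Y Z ∧
            Om2 Y (I2 Z) = -(1 / ((n : ℝ) + 2)) * Rs Y Z ∧
            Om3 Y (I3 Z) = -(1 / ((n : ℝ) + 2)) * Rs Y Z) ∧
    (∀ Y Z, Om1 Y (I1 Z) = Om2 Y (I2 Z) ∧ Om2 Y (I2 Z) = Om3 Y (I3 Z)) ∧
    (∀ X, Om1 X (I1 X) = -(1 / ((n : ℝ) + 2)) * R X X ∧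
          Om2 X (I2 X) = -(1 / ((n : ℝ) + 2)) * R X X ∧
          Om3 X (I3 X) = -(1 / ((n : ℝ) + 2)) * R X X) := by

  have hnr : (1:ℝ) ≤ (n:ℝ) := by exact_mod_cast hn
  have hII1 : ∀ Z, I1 (I1 Z) = -Z := fun Z => by
    have := DFunLike.congr_fun hI1 Z; simpa using this
  have hII2 : ∀ Z, I2 (I2 Z) = -Z := fun Z => by
    have := DFunLike.congr_fun hI2 Z; simpa using this
  have hII3 : ∀ Z, I3 (I3 Z) = -Z := fun Z => by
    have := DFunLike.congr_fun hI3 Z; simpa using this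
  have hRsh1 : ∀ X Y, Rs (I1 X) (I1 Y) = Rs X Y := fun X Y => by
    rw [hRs, hRs, hherm1, hherm1]
  have hRsh2 : ∀ X Y, Rs (I2 X) (I2 Y) = Rs X Y := fun X Y => by
    rw [hRs, hRs, hherm2, hherm2]
  have hRsh3 : ∀ X Y, Rs (I3 X) (I3 Y) = Rs X Y := fun X Y => by
    rw [hRs, hRs, hherm3, hherm3]
  have hPihRs : ∀ X Y, Pih X Y = Rs X Y := fun X Y => by
    rw [hPih, hRsh1, hRsh2, hRsh3]; ring
  have k1 := stmt7_key (n:ℝ) hnr I1 hII1 R Rs Ra Pih B Om1 hRs hRa hPihRs hB hOm1 hherm1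
  have k2 := stmt7_key (n:ℝ) hnr I2 hII2 R Rs Ra Pih B Om2 hRs hRa hPihRs hB hOm2 hherm2
  have k3 := stmt7_key (n:ℝ) hnr I3 hII3 R Rs Ra Pih B Om3 hRs hRa hPihRs hB hOm3 hherm3
  refine ⟨fun Y Z => ⟨k1 Y Z, k2 Y Z, k3 Y Z⟩,
    fun Y Z => ⟨by rw [k1, k2], by rw [k2, k3]⟩, fun X => ?_⟩
  have hRxx : Rs X X = R X X := by rw [hRs]; ring
  exact ⟨by rw [k1, hRxx], by rw [k2, hRxx], by rw [k3, hRxx]⟩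
end

section
/- Let R : V × V → End(V) be a bilinear map, and define R^{(0,2) I₁}_{X,Y} := (1/4)(R_{X,Y} + I₁∘R_{I₁X,Y} + I₁∘R_{X,I₁Y} − R_{I₁X,I₁Y}). If R^{(0,2) I₁}_{X,Y} commutes with I₁ for all X, Y ∈ V, then for all X, Y ∈ V one has Tr(I₂ ∘ R_{X,Y}) = Tr(I₂ ∘ R_{I₁X,I₁Y}) + Tr(I₃ ∘ R_{I₁X,Y}) + Tr(I₃ ∘ R_{X,I₁Y}). (This is the trace identity by which the paper proves A_α = 0 in Lemma 3.7, using the vanishing of the (0,2)-component of the curvature of a quaternionic connection.) -/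
/-- if the `(0,2)`-component `R^{(0,2) I₁}` of `R` commutes with `I₁`,
then `Tr(I₂ R_{X,Y}) = Tr(I₂ R_{I₁X,I₁Y}) + Tr(I₃ R_{I₁X,Y}) + Tr(I₃ R_{X,I₁Y})`. -/
theorem stmt9 {V : Type*} [AddCommGroup V] [Module ℝ V] [FiniteDimensional ℝ V]
    (n : ℕ) (hn : 1 ≤ n) (hdim : Module.finrank ℝ V = 4 * n)
    (I1 I2 I3 : V →ₗ[ℝ] V)
    (hI1 : I1 ∘ₗ I1 = -LinearMap.id) (hI2 : I2 ∘ₗ I2 = -LinearMap.id)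
    (hI3 : I3 ∘ₗ I3 = -LinearMap.id)
    (hI12 : I1 ∘ₗ I2 = I3) (hI21 : I2 ∘ₗ I1 = -I3)
    (R : V →ₗ[ℝ] V →ₗ[ℝ] (V →ₗ[ℝ] V))
    (h02 : ∀ X Y,
      ((1 / 4 : ℝ) • (R X Y + I1 ∘ₗ R (I1 X) Y + I1 ∘ₗ R X (I1 Y) - R (I1 X) (I1 Y))) ∘ₗ I1
      = I1 ∘ₗ ((1 / 4 : ℝ) • (R X Y + I1 ∘ₗ R (I1 X) Y + I1 ∘ₗ R X (I1 Y)
          - R (I1 X) (I1 Y)))) :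
    ∀ X Y, LinearMap.trace ℝ V (I2 ∘ₗ R X Y)
      = LinearMap.trace ℝ V (I2 ∘ₗ R (I1 X) (I1 Y))
        + LinearMap.trace ℝ V (I3 ∘ₗ R (I1 X) Y)
        + LinearMap.trace ℝ V (I3 ∘ₗ R X (I1 Y)) := by
  intro X Y
  simp only [← Module.End.mul_eq_comp, ← Module.End.one_eq_id] at *
  have hI3I1 : I3 * I1 = I2 := by
    rw [← hI12, mul_assoc, hI21]
    rw [show I1 * -I3 = -(I1 * I3) from by noncomm_ring, ← hI12, ← mul_assoc, hI1]
    noncomm_ring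
  set A : V →ₗ[ℝ] V := R X Y + I1 * R (I1 X) Y + I1 * R X (I1 Y) - R (I1 X) (I1 Y)
    with hA
  have hcomm : A * I1 = I1 * A := by
    have h := h02 X Y
    rw [smul_mul_assoc, mul_smul_comm] at h
    exact smul_right_injective (V →ₗ[ℝ] V) (by norm_num : (1/4:ℝ) ≠ 0) h
  have hAneg : I2 * A = -((I2 * I1) * (A * I1)) := by
    rw [hcomm]; rw [show I2*I1*(I1*A) = I2*(I1*I1)*A from by noncomm_ring, hI1]; noncomm_ring
  have htr : LinearMap.trace ℝ V (I2 * A) = 0 := by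
    have h2 : LinearMap.trace ℝ V ((I2 * I1) * (A * I1))
        = LinearMap.trace ℝ V (I2 * A) := by
      rw [show (I2*I1)*(A*I1) = ((I2*I1)*A)*I1 from by noncomm_ring,
        LinearMap.trace_mul_comm, show I1*(I2*I1*A) = (I1*I2*I1)*A from by noncomm_ring,
        hI12, hI3I1]
    have h3 := congrArg (LinearMap.trace ℝ V) hAneg
    rw [map_neg, h2] at h3
    linarith
  have hexp : I2 * A = I2 * R X Y - I3 * R (I1 X) Y - I3 * R X (I1 Y)
      - I2 * R (I1 X) (I1 Y) := by
    rw [hA]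
    rw [show I2 * (R X Y + I1 * R (I1 X) Y + I1 * R X (I1 Y) - R (I1 X) (I1 Y))
      = I2 * R X Y + (I2*I1) * R (I1 X) Y + (I2*I1) * R X (I1 Y)
        - I2 * R (I1 X) (I1 Y) from by noncomm_ring, hI21]
    noncomm_ring
  rw [hexp] at htr
  simp only [map_sub] at htr
  linarith
end
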